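/- arXiv:math/9812106 — 2 statements merged into one kernel-verified Lean document; each statement's English description precedes it below -/
import Mathlib

section
/- For the level-one perfect crystal B(2Λ₁) ⊕ B(0) of type C_n^{(1)}, given explicitly as two-row-free one-row tableaux of length ≤ 2 in the alphabet {1 < ... < n < n̄ < ... < 1̄} together with ∅, with the stated crystal structure, no element lies on the nondominant part of at least two strings of length ≥ 2; all strings of length > 1 are exactly the explicitly listed k-strings of length 2 (for 1 ≤ k ≤ n) and the 0-string (1̄1̄) → ∅ → (11). -/
/-!
For `c ≥ 1` the tensor product rule makes every two-step `c`-string of the form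
`x ⊗ y → x ⊗ y⁺ → x⁺ ⊗ y⁺`, where `x, y` range over the two letters `c` and `\overline{c+1}`
that carry an outgoing `c`-arrow and `⁺` follows that arrow; for `c = 0` the only two-step
string is `(1̄1̄) → ∅ → (11)`. No string has three steps, so `φ_c + ε_c ≥ 2` holds exactly on
these elements, and the condition `x ≤ y` cuts them down to the listed ones. An element that
admits `e_c` on such a string is its middle or top element, and there the second letter is
entered by a `c`-arrow (or the element is `∅` and `c = 0`), so it determines `c`.
-/

open scoped Classical

/-- Iterate a partial map `m` times. -/
def pIter {B : Type*} (g : B → Option B) : ℕ → B → Option B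
  | 0, b => some b
  | n+1, b => (g b).bind (pIter g n)

/-- Elements of the level-one perfect crystal `B(2Λ₁) ⊕ B(0)` of type `C_n^{(1)}`:
`∅` (encoded `none`) together with one-row tableaux `(x,y)` in the alphabet
`{1 < ⋯ < n < n̄ < ⋯ < 1̄}` (encoded `Fin (2n)`, 0-based); the valid ones satisfy
`x ≤ y`. -/
abbrev EltC (n : ℕ) := Option (Fin (2*n) × Fin (2*n))

/-- Successor in the alphabet. -/
def fsucc (n : ℕ) (hn : 0 < n) (v : Fin (2*n)) : Fin (2*n) :=
  ⟨(v.val + 1) % (2*n), Nat.mod_lt _ (by omega)⟩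

/-- `φ_c` of a single letter in the chain `1 → 2 → ⋯ → n → n̄ → ⋯ → 1̄` with edge
colors `1,…,n-1,n,n-1,…,1`: the edge out of `v` has color `min (v+1) (2n-1-v)`. -/
def phiLetter (n : ℕ) (c : ℕ) (v : Fin (2*n)) : ℕ :=
  if v.val + 1 < 2*n ∧ c = min (v.val + 1) (2*n - 1 - v.val) then 1 else 0

/-- `ε_c` of a single letter: the edge into `v` has color `min v (2n - v)`. -/
def epsLetter (n : ℕ) (c : ℕ) (v : Fin (2*n)) : ℕ :=
  if 0 < v.val ∧ c = min v.val (2*n - v.val) then 1 else 0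

/-- The lowering operators on `B(2Λ₁) ⊕ B(0)` for `C_n^{(1)}`: for colors
`1 ≤ c ≤ n` via the tensor product rule on `(x, y) = x ⊗ y`, and
`f₀ : (i,1̄) ↦ (1,i)` for `i ≠ 1,1̄`, `(1̄,1̄) ↦ ∅`, `∅ ↦ (1,1)`. -/
def fC (n : ℕ) (hn : 0 < n) (c : ℕ) : EltC n → Option (EltC n)
  | none => if c = 0 then some (some (⟨0, by omega⟩, ⟨0, by omega⟩)) else none
  | some (x, y) =>
    if c = 0 then
      if y.val = 2*n - 1 then
        if x.val = 2*n - 1 then some none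
        else if x.val ≠ 0 then some (some (⟨0, by omega⟩, x)) else none
      else none
    else
      if epsLetter n c x < phiLetter n c y then some (some (x, fsucc n hn y))
      else if phiLetter n c x = 1 then some (some (fsucc n hn x, y))
      else none

/-- `φ_c(b)`: maximal number of times `f_c` applies. -/
noncomputable def phiC (n : ℕ) (hn : 0 < n) (c : ℕ) (b : EltC n) : ℕ :=
  sSup {m | (pIter (fC n hn c) m b).isSome}

/-- `ε_c(b)`: maximal number of times `e_c = f_c⁻¹` applies, i.e. the maximal `m`
such that `b` is the image of `f_c^m`. -/
noncomputable def epsC (n : ℕ) (hn : 0 < n) (c : ℕ) (b : EltC n) : ℕ :=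
  sSup {m | ∃ a, pIter (fC n hn c) m a = some b}

theorem Nat.le_sSup_iff_mem_of_isLowerSet {S : Set ℕ} (hS : IsLowerSet S) (hne : S.Nonempty)
    (hbdd : BddAbove S) {k : ℕ} : k ≤ sSup S ↔ k ∈ S :=
  ⟨fun hk => hS hk (Nat.sSup_mem hne hbdd), fun hk => le_csSup hbdd hk⟩

section PartialIteration

variable {B : Type*} (g : B → Option B)

theorem pIter_add (m k : ℕ) (b : B) :
    pIter g (m + k) b = (pIter g m b).bind (pIter g k) := by
  induction m generalizing b with
  | zero => simp [pIter]
  | succ m ih => simp [Nat.succ_add, pIter, ih, Option.bind_assoc]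

theorem pIter_one : pIter g 1 = g :=
  funext fun b => by simp [pIter]

theorem pIter_two (b : B) : pIter g 2 b = (g b).bind g := by
  simp [pIter]

variable {g}

theorem isSome_pIter_of_le {k m : ℕ} (hkm : k ≤ m) {b : B} (h : (pIter g m b).isSome) :
    (pIter g k b).isSome := by
  rw [← Nat.add_sub_cancel' hkm, pIter_add] at h
  cases hk : pIter g k b <;> simp_all

theorem exists_pIter_eq_some_of_le {k m : ℕ} (hkm : k ≤ m) {a b : B}
    (h : pIter g m a = some b) : ∃ a', pIter g k a' = some b := by
  rw [← Nat.sub_add_cancel hkm, pIter_add, Option.bind_eq_some_iff] at h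
  obtain ⟨a', -, h⟩ := h
  exact ⟨a', h⟩

section Bounded

variable {N : ℕ} (hN : ∀ a, pIter g N a = none)
include hN

theorem pIter_eq_none_of_le {m : ℕ} (hm : N ≤ m) (a : B) : pIter g m a = none := by
  rw [← Nat.add_sub_cancel' hm, pIter_add, hN]
  rfl

theorem le_sSup_isSome_pIter_iff (k : ℕ) (b : B) :
    k ≤ sSup {m | (pIter g m b).isSome} ↔ (pIter g k b).isSome := by
  refine Nat.le_sSup_iff_mem_of_isLowerSet (fun _ _ hkm h => isSome_pIter_of_le hkm h)
    ⟨0, rfl⟩ ⟨N, fun m hm => le_of_not_gt fun hNm => ?_⟩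
  have hm : (pIter g m b).isSome := hm
  simp [pIter_eq_none_of_le hN hNm.le] at hm

theorem le_sSup_pIter_eq_some_iff (k : ℕ) (b : B) :
    k ≤ sSup {m | ∃ a, pIter g m a = some b} ↔ ∃ a, pIter g k a = some b := by
  refine Nat.le_sSup_iff_mem_of_isLowerSet (S := {m | ∃ a, pIter g m a = some b}) ?_
    ⟨0, b, rfl⟩ ⟨N, ?_⟩
  · rintro _ _ hkm ⟨_, h⟩
    exact exists_pIter_eq_some_of_le hkm h
  · rintro m ⟨a, hm⟩
    refine le_of_not_gt fun hNm => ?_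
    simp [pIter_eq_none_of_le hN hNm.le] at hm

theorem two_le_sSup_add_sSup_iff (b : B) :
    2 ≤ sSup {m | (pIter g m b).isSome} + sSup {m | ∃ a, pIter g m a = some b} ↔
      (∃ b₁ b₂, g b = some b₁ ∧ g b₁ = some b₂) ∨
      (∃ a b₁, g a = some b ∧ g b = some b₁) ∨
      (∃ a₁ a₂, g a₁ = some a₂ ∧ g a₂ = some b) := by
  rw [show ∀ φ ε : ℕ, 2 ≤ φ + ε ↔ 2 ≤ φ ∨ (1 ≤ φ ∧ 1 ≤ ε) ∨ 2 ≤ ε from fun _ _ => by omega,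
    le_sSup_isSome_pIter_iff hN, le_sSup_isSome_pIter_iff hN, le_sSup_pIter_eq_some_iff hN,
    le_sSup_pIter_eq_some_iff hN]
  simp only [pIter_one, pIter_two, Option.isSome_iff_exists, Option.bind_eq_some_iff,
    exists_and_left, exists_and_right]
  rw [exists_comm, and_comm (a := ∃ a, g b = some a)]
  simp only [exists_and_left]

end Bounded

theorem two_step_through_or_into_of_two_le (h3 : ∀ a, pIter g 3 a = none) {a b : B}
    (hab : g a = some b)
    (h2 : 2 ≤ sSup {m | (pIter g m b).isSome} + sSup {m | ∃ a, pIter g m a = some b}) :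
    (∃ a b₁, g a = some b ∧ g b = some b₁) ∨ ∃ a₁ a₂, g a₁ = some a₂ ∧ g a₂ = some b := by
  rcases (two_le_sSup_add_sSup_iff h3 b).mp h2 with ⟨b₁, b₂, h₁, h₂⟩ | h | h
  · have := h3 a
    rw [show 3 = 1 + 2 from rfl, pIter_add, pIter_one, hab] at this
    simp [pIter_two, h₁, h₂] at this
  · exact .inl h
  · exact .inr h

end PartialIteration

section Crystal

variable {n : ℕ} (hn : 0 < n)

theorem fsucc_val {v : Fin (2*n)} (h : v.val + 1 < 2*n) : (fsucc n hn v).val = v.val + 1 :=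
  Nat.mod_eq_of_lt h

theorem fC_none_of_ne_zero {c : ℕ} (hc : c ≠ 0) : fC n hn c none = none := by
  simp [fC, hc]

theorem epsLetter_eq_ite {c : ℕ} (hc : 1 ≤ c) (hcn : c ≤ n) (x : Fin (2*n)) :
    epsLetter n c x = if x.val = c ∨ x.val = 2*n - c then 1 else 0 := by
  unfold epsLetter
  split_ifs <;> omega

theorem phiLetter_eq_ite {c : ℕ} (hc : 1 ≤ c) (hcn : c ≤ n) (x : Fin (2*n)) :
    phiLetter n c x = if x.val = c - 1 ∨ x.val = 2*n - 1 - c then 1 else 0 := by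
  have := x.isLt
  unfold phiLetter
  split_ifs <;> omega

theorem fC_some_of_pos {c : ℕ} (hc : 1 ≤ c) (hcn : c ≤ n) (x y : Fin (2*n)) :
    fC n hn c (some (x, y)) =
      if ¬(x.val = c ∨ x.val = 2*n - c) ∧ (y.val = c - 1 ∨ y.val = 2*n - 1 - c) then
        some (some (x, fsucc n hn y))
      else if x.val = c - 1 ∨ x.val = 2*n - 1 - c then some (some (fsucc n hn x, y))
      else none := by
  simp only [fC, if_neg (show c ≠ 0 by omega), epsLetter_eq_ite hc hcn,
    phiLetter_eq_ite hc hcn]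
  split_ifs <;> first | rfl | omega

theorem fC_two_step_iff_of_pos {c : ℕ} (hc : 1 ≤ c) (hcn : c ≤ n) {a b₁ b₂ : EltC n} :
    fC n hn c a = some b₁ ∧ fC n hn c b₁ = some b₂ ↔
      ∃ x y : Fin (2*n), (x.val = c - 1 ∨ x.val = 2*n - 1 - c) ∧
        (y.val = c - 1 ∨ y.val = 2*n - 1 - c) ∧ a = some (x, y) ∧
        b₁ = some (x, fsucc n hn y) ∧ b₂ = some (fsucc n hn x, fsucc n hn y) := by
  constructor
  · rintro ⟨h₁, h₂⟩
    rcases a with _ | ⟨x, y⟩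
    · simp [fC_none_of_ne_zero hn (show c ≠ 0 by omega)] at h₁
    have := x.isLt
    have := y.isLt
    rw [fC_some_of_pos hn hc hcn] at h₁
    split_ifs at h₁ with hy hx <;> cases h₁
    · have := fsucc_val hn (v := y) (by omega)
      rw [fC_some_of_pos hn hc hcn] at h₂
      split_ifs at h₂ with h h' <;> cases h₂
      · omega
      · exact ⟨x, y, h', hy.2, rfl, rfl, rfl⟩
    · have := fsucc_val hn (v := x) (by omega)
      rw [fC_some_of_pos hn hc hcn] at h₂
      split_ifs at h₂ <;> omega
  · rintro ⟨x, y, hx, hy, rfl, rfl, rfl⟩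
    have := fsucc_val hn (v := y) (by omega)
    rw [fC_some_of_pos hn hc hcn, if_pos ⟨by omega, hy⟩, fC_some_of_pos hn hc hcn,
      if_neg (by omega), if_pos hx]
    exact ⟨rfl, rfl⟩

theorem fC_zero_two_step_iff {a b₁ b₂ : EltC n} :
    fC n hn 0 a = some b₁ ∧ fC n hn 0 b₁ = some b₂ ↔
      a = some (⟨2*n - 1, by omega⟩, ⟨2*n - 1, by omega⟩) ∧ b₁ = none ∧
        b₂ = some (⟨0, by omega⟩, ⟨0, by omega⟩) := by
  constructor
  · rintro ⟨h₁, h₂⟩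
    rcases a with _ | ⟨x, y⟩
    · simp only [fC, if_pos, Option.some.injEq] at h₁
      subst h₁
      simp [fC] at h₂
      omega
    · have := x.isLt
      have := y.isLt
      simp only [fC, if_true] at h₁
      split_ifs at h₁ with hy hx <;> cases h₁
      · simp only [fC, if_true, Option.some.injEq] at h₂
        refine ⟨?_, rfl, h₂.symm⟩
        simp [Fin.ext_iff, hx, hy]
      · simp [fC] at h₂
        omega
  · rintro ⟨rfl, rfl, rfl⟩
    simp [fC]

theorem pIter_fC_three_eq_none {c : ℕ} (hcn : c ≤ n) (a : EltC n) :
    pIter (fC n hn c) 3 a = none := by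
  rw [show 3 = 2 + 1 from rfl, pIter_add, pIter_two, pIter_one, Option.eq_none_iff_forall_ne_some]
  intro b₃ h
  simp only [Option.bind_eq_some_iff] at h
  obtain ⟨b₂, ⟨b₁, h₁, h₂⟩, h₃⟩ := h
  rcases Nat.eq_zero_or_pos c with rfl | hc
  · obtain ⟨-, -, rfl⟩ := (fC_zero_two_step_iff hn).mp ⟨h₁, h₂⟩
    simp [fC] at h₃
    omega
  · obtain ⟨x, y, hx, hy, -, -, rfl⟩ := (fC_two_step_iff_of_pos hn hc hcn).mp ⟨h₁, h₂⟩
    have := fsucc_val hn (v := x) (by omega)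
    have := fsucc_val hn (v := y) (by omega)
    rw [fC_some_of_pos hn hc hcn] at h₃
    split_ifs at h₃ <;> omega

theorem two_le_phiC_zero_add_epsC_zero_iff (b : EltC n) :
    2 ≤ phiC n hn 0 b + epsC n hn 0 b ↔
      b = none ∨ b = some (⟨0, by omega⟩, ⟨0, by omega⟩) ∨
        b = some (⟨2*n - 1, by omega⟩, ⟨2*n - 1, by omega⟩) := by
  rw [phiC, epsC, two_le_sSup_add_sSup_iff (pIter_fC_three_eq_none hn (Nat.zero_le n))]
  simp only [fC_zero_two_step_iff, exists_and_left, exists_eq_left, exists_eq, and_true]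
  tauto

theorem two_le_phiC_add_epsC_iff_of_pos {c : ℕ} (hc : 1 ≤ c) (hcn : c ≤ n) (b : EltC n) :
    2 ≤ phiC n hn c b + epsC n hn c b ↔
      ∃ x y : Fin (2*n), (x.val = c - 1 ∨ x.val = 2*n - 1 - c) ∧
        (y.val = c - 1 ∨ y.val = 2*n - 1 - c) ∧
        (b = some (x, y) ∨ b = some (x, fsucc n hn y) ∨ b = some (fsucc n hn x, fsucc n hn y)) := by
  rw [phiC, epsC, two_le_sSup_add_sSup_iff (pIter_fC_three_eq_none hn hcn)]
  simp only [fC_two_step_iff_of_pos hn hc hcn]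
  constructor
  · rintro (⟨-, -, x, y, hx, hy, rfl, -⟩ | ⟨-, -, x, y, hx, hy, -, rfl, -⟩ |
      ⟨-, -, x, y, hx, hy, -, -, rfl⟩)
    exacts [⟨x, y, hx, hy, .inl rfl⟩, ⟨x, y, hx, hy, .inr (.inl rfl)⟩,
      ⟨x, y, hx, hy, .inr (.inr rfl)⟩]
  · rintro ⟨x, y, hx, hy, rfl | rfl | rfl⟩
    exacts [.inl ⟨_, _, x, y, hx, hy, rfl, rfl, rfl⟩,
      .inr (.inl ⟨_, _, x, y, hx, hy, rfl, rfl, rfl⟩),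
      .inr (.inr ⟨_, _, x, y, hx, hy, rfl, rfl, rfl⟩)]

theorem two_le_phiC_add_epsC_iff_of_pos_of_le {c : ℕ} (hc : 1 ≤ c) (hcn : c ≤ n) {b : EltC n}
    (hb : b = none ∨ ∃ x y : Fin (2*n), x ≤ y ∧ b = some (x, y))
    (hp : c - 1 < 2*n) (hq : 2*n - 1 - c < 2*n) :
    2 ≤ phiC n hn c b + epsC n hn c b ↔
      (b = some (⟨c - 1, hp⟩, ⟨c - 1, hp⟩)
      ∨ b = some (⟨c - 1, hp⟩, fsucc n hn ⟨c - 1, hp⟩)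
      ∨ b = some (fsucc n hn ⟨c - 1, hp⟩, fsucc n hn ⟨c - 1, hp⟩)
      ∨ b = some (⟨c - 1, hp⟩, ⟨2*n - 1 - c, hq⟩)
      ∨ b = some (⟨c - 1, hp⟩, fsucc n hn ⟨2*n - 1 - c, hq⟩)
      ∨ b = some (fsucc n hn ⟨c - 1, hp⟩, fsucc n hn ⟨2*n - 1 - c, hq⟩)
      ∨ b = some (⟨2*n - 1 - c, hq⟩, ⟨2*n - 1 - c, hq⟩)
      ∨ b = some (⟨2*n - 1 - c, hq⟩, fsucc n hn ⟨2*n - 1 - c, hq⟩)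
      ∨ b = some (fsucc n hn ⟨2*n - 1 - c, hq⟩, fsucc n hn ⟨2*n - 1 - c, hq⟩)) := by
  rw [two_le_phiC_add_epsC_iff_of_pos hn hc hcn]
  set p : Fin (2*n) := ⟨c - 1, hp⟩
  set q : Fin (2*n) := ⟨2*n - 1 - c, hq⟩
  constructor
  · rintro ⟨x, y, hx, hy, hxyb⟩
    have hxy : x.val ≤ y.val := by
      rcases hb with rfl | ⟨u, v, huv, rfl⟩
      · simp at hxyb
      have := fsucc_val hn (v := x) (by omega)
      have := fsucc_val hn (v := y) (by omega)
      rw [Fin.le_def] at huv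
      rcases hxyb with h | h | h <;> simp only [Option.some.injEq, Prod.mk.injEq] at h <;>
        obtain ⟨rfl, rfl⟩ := h <;> omega
    have : (x = p ∧ y = p) ∨ (x = p ∧ y = q) ∨ (x = q ∧ y = q) := by
      simp only [p, q, Fin.ext_iff]
      omega
    rcases this with ⟨rfl, rfl⟩ | ⟨rfl, rfl⟩ | ⟨rfl, rfl⟩ <;> rcases hxyb with h | h | h <;>
      simp only [h, true_or, or_true]
  · have hp' : p.val = c - 1 ∨ p.val = 2*n - 1 - c := .inl rfl
    have hq' : q.val = c - 1 ∨ q.val = 2*n - 1 - c := .inr rfl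
    rintro (h | h | h | h | h | h | h | h | h) <;> subst h
    exacts [⟨p, p, hp', hp', .inl rfl⟩, ⟨p, p, hp', hp', .inr (.inl rfl)⟩,
      ⟨p, p, hp', hp', .inr (.inr rfl)⟩, ⟨p, q, hp', hq', .inl rfl⟩,
      ⟨p, q, hp', hq', .inr (.inl rfl)⟩, ⟨p, q, hp', hq', .inr (.inr rfl)⟩,
      ⟨q, q, hq', hq', .inl rfl⟩, ⟨q, q, hq', hq', .inr (.inl rfl)⟩,
      ⟨q, q, hq', hq', .inr (.inr rfl)⟩]

def incomingColor : EltC n → ℕ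
  | none => 0
  | some (_, y) => min y.val (2*n - y.val)

theorem eq_incomingColor_of_fC_eq_some_of_two_le {c : ℕ} (hcn : c ≤ n) {a b : EltC n}
    (hab : fC n hn c a = some b) (h2 : 2 ≤ phiC n hn c b + epsC n hn c b) :
    c = incomingColor b := by
  have hpos := two_step_through_or_into_of_two_le (pIter_fC_three_eq_none hn hcn) hab h2
  rcases Nat.eq_zero_or_pos c with rfl | hc
  · rcases hpos with ⟨_, _, h⟩ | ⟨_, _, h⟩
    · rw [((fC_zero_two_step_iff hn).mp h).2.1, incomingColor]
    · simp [((fC_zero_two_step_iff hn).mp h).2.2, incomingColor]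
  · rcases hpos with ⟨_, _, h⟩ | ⟨_, _, h⟩
    · obtain ⟨x, y, -, hy, -, rfl, -⟩ := (fC_two_step_iff_of_pos hn hc hcn).mp h
      rw [incomingColor, fsucc_val hn (by omega)]
      omega
    · obtain ⟨x, y, -, hy, -, -, rfl⟩ := (fC_two_step_iff_of_pos hn hc hcn).mp h
      rw [incomingColor, fsucc_val hn (by omega)]
      omega

end Crystal

/-- in the level-one perfect crystal `B(2Λ₁) ⊕ B(0)` of type
`C_n^{(1)}`, no element lies on the nondominant part of at least two strings of
length `≥ 2`, and the strings of length `> 1` are exactly the listed `k`-strings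
of length two (for `1 ≤ k ≤ n`, on the elements `(k,k),(k,k+1),(k+1,k+1)`,
`(k,\overline{k+1}),(k,k̄),(k+1,k̄)`, `(\overline{k+1},\overline{k+1}),
(\overline{k+1},k̄),(k̄,k̄)`) and the `0`-string `(1̄,1̄) → ∅ → (1,1)`. -/
theorem typeC_level_one_crystal_strings (n : ℕ) (hn : 2 ≤ n) :
    (∀ b : EltC n,
      (b = none ∨ ∃ x y : Fin (2*n), x ≤ y ∧ b = some (x, y)) →
      (Finset.univ.filter (fun c : Fin (n+1) =>
          (∃ a, fC n (by omega) c.val a = some b) ∧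
          2 ≤ phiC n (by omega) c.val b + epsC n (by omega) c.val b)).card ≤ 1)
    ∧ (∀ (c : Fin (n+1)) (b : EltC n),
        (b = none ∨ ∃ x y : Fin (2*n), x ≤ y ∧ b = some (x, y)) →
        (2 ≤ phiC n (by omega) c.val b + epsC n (by omega) c.val b ↔
          (c.val = 0 ∧
            (b = none
              ∨ b = some (⟨0, by omega⟩, ⟨0, by omega⟩)
              ∨ b = some (⟨2*n - 1, by omega⟩, ⟨2*n - 1, by omega⟩)))
          ∨ (0 < c.val ∧
              ∃ (hp : c.val - 1 < 2*n) (hq : 2*n - 1 - c.val < 2*n),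
                (b = some (⟨c.val - 1, hp⟩, ⟨c.val - 1, hp⟩)
                ∨ b = some (⟨c.val - 1, hp⟩, fsucc n (by omega) ⟨c.val - 1, hp⟩)
                ∨ b = some (fsucc n (by omega) ⟨c.val - 1, hp⟩,
                    fsucc n (by omega) ⟨c.val - 1, hp⟩)
                ∨ b = some (⟨c.val - 1, hp⟩, ⟨2*n - 1 - c.val, hq⟩)
                ∨ b = some (⟨c.val - 1, hp⟩, fsucc n (by omega) ⟨2*n - 1 - c.val, hq⟩)
                ∨ b = some (fsucc n (by omega) ⟨c.val - 1, hp⟩,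
                    fsucc n (by omega) ⟨2*n - 1 - c.val, hq⟩)
                ∨ b = some (⟨2*n - 1 - c.val, hq⟩, ⟨2*n - 1 - c.val, hq⟩)
                ∨ b = some (⟨2*n - 1 - c.val, hq⟩, fsucc n (by omega) ⟨2*n - 1 - c.val, hq⟩)
                ∨ b = some (fsucc n (by omega) ⟨2*n - 1 - c.val, hq⟩,
                    fsucc n (by omega) ⟨2*n - 1 - c.val, hq⟩))))) := by
  have hn0 : 0 < n := by omega
  refine ⟨fun b _ => ?_, fun c b hb => ?_⟩
  · refine Finset.card_le_one.mpr fun c₁ h₁ c₂ h₂ => Fin.ext ?_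
    simp only [Finset.mem_filter, Finset.mem_univ, true_and] at h₁ h₂
    obtain ⟨⟨a₁, ha₁⟩, h₁⟩ := h₁
    obtain ⟨⟨a₂, ha₂⟩, h₂⟩ := h₂
    rw [eq_incomingColor_of_fC_eq_some_of_two_le hn0 (by omega) ha₁ h₁,
      eq_incomingColor_of_fC_eq_some_of_two_le hn0 (by omega) ha₂ h₂]
  · rcases c with ⟨_ | k, hk⟩
    · refine (two_le_phiC_zero_add_epsC_zero_iff hn0 b).trans ⟨fun h => .inl ⟨rfl, h⟩, ?_⟩
      rintro (⟨-, h⟩ | ⟨h, -⟩)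
      exacts [h, absurd h (lt_irrefl 0)]
    · refine (two_le_phiC_add_epsC_iff_of_pos_of_le hn0 (c := k + 1) (by omega) (by omega) hb
        (by omega) (by omega)).trans ⟨fun h => .inr ⟨k.succ_pos, by omega, by omega, h⟩, ?_⟩
      rintro (⟨h, -⟩ | ⟨-, _, _, h⟩)
      exacts [absurd h k.succ_ne_zero, h]
end

section
/- Type A level-restricted path space at level 1: let g be of type A_{n-1}^{(1)}, B = B^{k_L,1} ⊗ ... ⊗ B^{k_1,1} a tensor product of column crystals, and Λ, Λ' ∈ P_cl⁺ of level 1. Then the set P(B,Λ,Λ') of paths b ∈ B with b ⊗ u_Λ a highest weight vector of weight Λ' contains at most one element. -/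
open scoped Classical

/-- Cyclic predecessor in `Fin n`. -/
def predF {n : ℕ} (c : Fin n) : Fin n := c - ⟨1 % n, Nat.mod_lt 1 c.pos⟩

/-- A column of the crystal `B^{k,1}` of type `A_{n-1}^{(1)}` is a `k`-element
subset of `{1,…,n}` (encoded `Finset (Fin n)`).  The affine raising operator
`e_c` (colors `c ∈ {0,1,…,n-1}`, with `0` the affine color) replaces the letter
`c` by `predF c` (cyclically). -/
def eCol (n : ℕ) (c : Fin n) (S : Finset (Fin n)) : Option (Finset (Fin n)) :=
  if c ∈ S ∧ predF c ∉ S then some (insert (predF c) (S.erase c)) else none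

/-- The lowering operator `f_c` replaces the letter `predF c` by `c`. -/
def fCol (n : ℕ) (c : Fin n) (S : Finset (Fin n)) : Option (Finset (Fin n)) :=
  if predF c ∈ S ∧ c ∉ S then some (insert c (S.erase (predF c))) else none

/-- `ε_c` of a column. -/
def epsCol (n : ℕ) (c : Fin n) (S : Finset (Fin n)) : ℕ :=
  if c ∈ S ∧ predF c ∉ S then 1 else 0

/-- `φ_c` of a column. -/
def phiCol (n : ℕ) (c : Fin n) (S : Finset (Fin n)) : ℕ :=
  if predF c ∈ S ∧ c ∉ S then 1 else 0

/-- `φ_c` of a tensor product `b_L ⊗ ⋯ ⊗ b_1 ⊗ u` of columns (head of the list is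
the leftmost factor `b_L`) where the rightmost factor `u` has `φ_c(u) = lam c` and
`ε_c(u) = 0`:  `φ(b₂ ⊗ b₁) = φ(b₂) + max(0, φ(b₁) - ε(b₂))`. -/
def phiPath (n : ℕ) (lam : Fin n → ℕ) (c : Fin n) : List (Finset (Fin n)) → ℕ
  | [] => lam c
  | x :: l => phiCol n c x + (phiPath n lam c l - epsCol n c x)

/-- `ε_c` of a tensor product of columns (against the same rightmost factor `u`):
`ε(b₂ ⊗ b₁) = ε(b₁) + max(0, ε(b₂) - φ(b₁))`. -/
def epsPath (n : ℕ) (lam : Fin n → ℕ) (c : Fin n) : List (Finset (Fin n)) → ℕ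
  | [] => 0
  | x :: l => epsPath n lam c l + (epsCol n c x - phiPath n lam c l)

/-- Number of occurrences of the letter `a` in the path. -/
def countLetter (n : ℕ) (p : List (Finset (Fin n))) (a : Fin n) : ℕ :=
  (p.map (fun S => if a ∈ S then 1 else 0)).sum

/-!
Reading `b_L ⊗ ⋯ ⊗ b_1 ⊗ u_{Λ_r}` from the right, highest weight forces the column `b_1`
to satisfy `ε_c(b_1) ≤ φ_c(u_{Λ_r}) = δ_{c,r}`: it is closed under `c ↦ c - 1` except at `r`,
so it is the cyclic interval `{r, r+1, …, r+k_1-1}`. Then `φ(b_1 ⊗ u_{Λ_r}) = Λ_{r+k_1}` is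
again a level-one fundamental weight, and induction shows that every column, hence the
whole path, is determined by the shape `(k_L, …, k_1)`.
-/

open Fin.NatCast

lemma Fin.val_sub_one_eq_ite {n : ℕ} [NeZero n] (a : Fin n) :
    (a - 1).val = if a.val = 0 then n - 1 else a.val - 1 := by
  obtain ⟨m, rfl⟩ := Nat.exists_eq_succ_of_ne_zero (NeZero.ne n)
  simp [Fin.coe_sub_one, ← Fin.val_eq_zero_iff]

lemma predF_eq_sub_one {n : ℕ} [NeZero n] (c : Fin n) : predF c = c - 1 := by
  rw [predF]
  congr

lemma Finset.eq_range_card_of_succ_mem {H : Finset ℕ} (h : ∀ m, m + 1 ∈ H → m ∈ H) :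
    H = Finset.range H.card := by
  have range_succ_subset : ∀ m ∈ H, Finset.range (m + 1) ⊆ H := by
    intro m hm
    induction m with
    | zero => simpa using hm
    | succ m ih => simpa [Finset.range_add_one, Finset.insert_subset_iff, hm] using ih (h m hm)
  refine Finset.eq_of_subset_of_card_le (fun m hm => ?_) (Finset.card_range _).le
  simpa using Finset.card_le_card (range_succ_subset m hm)

/-- The fundamental weight `Λ_s` of level one, as its values `⟨h_c, Λ_s⟩ = δ_{c,s}`. -/
def fundWeight {n : ℕ} (s c : Fin n) : ℕ := if c = s then 1 else 0

def cyclicInterval {n : ℕ} (s : Fin n) (k : ℕ) : Finset (Fin n) :=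
  Finset.univ.filter fun c => (c - s).val < k

@[simp]
lemma mem_cyclicInterval {n : ℕ} {s c : Fin n} {k : ℕ} :
    c ∈ cyclicInterval s k ↔ (c - s).val < k := by
  simp [cyclicInterval]

lemma eq_cyclicInterval_of_sub_one_mem {n : ℕ} [NeZero n] {S : Finset (Fin n)} {s : Fin n}
    (hS : ∀ c ∈ S, c ≠ s → c - 1 ∈ S) : S = cyclicInterval s S.card := by
  have hinj : Function.Injective fun c : Fin n => (c - s).val :=
    fun a b hab => sub_left_injective (Fin.val_injective hab)
  set H := S.image fun c : Fin n => (c - s).val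
  have hH : H = Finset.range S.card := by
    rw [← Finset.card_image_of_injective S hinj]
    refine Finset.eq_range_card_of_succ_mem fun m hm => ?_
    obtain ⟨a, ha, hav⟩ := Finset.mem_image.mp hm
    have has : (a - s).val ≠ 0 := by omega
    refine Finset.mem_image.mpr ⟨a - 1, hS a ha ?_, ?_⟩
    · rintro rfl
      simp at has
    · rw [sub_right_comm, Fin.val_sub_one_eq_ite, if_neg has]
      omega
  ext c
  rw [mem_cyclicInterval, ← Finset.mem_range, ← hH, hinj.mem_finset_image]

lemma eq_cyclicInterval_of_epsCol_le {n : ℕ} [NeZero n] {S : Finset (Fin n)} {s : Fin n}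
    (h : ∀ c, epsCol n c S ≤ fundWeight s c) : S = cyclicInterval s S.card := by
  refine eq_cyclicInterval_of_sub_one_mem fun c hc hcs => ?_
  by_contra hc1
  simpa [epsCol, fundWeight, predF_eq_sub_one, hc, hc1, hcs] using h c

/-- `φ(b ⊗ u_{Λ_s}) = Λ_{s+k}` for the column `b = {s, …, s+k-1}`. -/
lemma phiCol_add_fundWeight_sub_epsCol_cyclicInterval {n : ℕ} [NeZero n] {k : ℕ} (hk : k ≤ n)
    (s c : Fin n) :
    phiCol n c (cyclicInterval s k) + (fundWeight s c - epsCol n c (cyclicInterval s k)) =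
      fundWeight (s + (k : Fin n)) c := by
  have hcs : c = s ↔ (c - s).val = 0 := by rw [← sub_eq_zero, Fin.ext_iff, Fin.val_zero]
  have hck : c = s + k ↔ (c - s).val = k % n := by
    rw [← sub_eq_iff_eq_add', Fin.ext_iff, Fin.val_natCast]
  have hkn : k % n = if k = n then 0 else k := by
    split_ifs with h
    · simp [h]
    · exact Nat.mod_eq_of_lt (by omega)
  have hpred : (c - 1 - s).val = if (c - s).val = 0 then n - 1 else (c - s).val - 1 := by
    rw [sub_right_comm, Fin.val_sub_one_eq_ite]
  have hlt := (c - s).isLt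
  simp only [phiCol, epsCol, fundWeight, predF_eq_sub_one, mem_cyclicInterval, hpred, hcs, hck,
    hkn]
  split_ifs <;> omega

/-- `b ⊗ u` is highest weight, where `u` is a highest weight vector with `φ(u) = lam`. -/
def IsHighestWeight {n : ℕ} (lam : Fin n → ℕ) (l : List (Finset (Fin n))) : Prop :=
  ∀ c, epsPath n lam c l = 0

lemma isHighestWeight_cons_iff {n : ℕ} {lam : Fin n → ℕ} {x : Finset (Fin n)}
    {l : List (Finset (Fin n))} :
    IsHighestWeight lam (x :: l) ↔
      IsHighestWeight lam l ∧ ∀ c, epsCol n c x ≤ phiPath n lam c l := by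
  simp only [IsHighestWeight, epsPath, Nat.add_eq_zero_iff, Nat.sub_eq_zero_iff_le]
  exact forall_and

section HighestWeight

variable {n : ℕ} [NeZero n]

lemma eq_cyclicInterval_of_isHighestWeight_cons {lam : Fin n → ℕ} {x : Finset (Fin n)}
    {l : List (Finset (Fin n))} {t : Fin n} (hphi : ∀ c, phiPath n lam c l = fundWeight t c)
    (hl : IsHighestWeight lam (x :: l)) : x = cyclicInterval t x.card :=
  eq_cyclicInterval_of_epsCol_le fun c => hphi c ▸ (isHighestWeight_cons_iff.mp hl).2 c

/-- The only candidate for a path `b` of shape `ks` with `b ⊗ u_{Λ_s}` highest weight. -/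
def highestWeightPath (s : Fin n) : List ℕ → List (Finset (Fin n))
  | [] => []
  | k :: ks => cyclicInterval (s + (ks.sum : Fin n)) k :: highestWeightPath s ks

variable {s : Fin n}

lemma IsHighestWeight.phiPath_eq {l : List (Finset (Fin n))}
    (hl : IsHighestWeight (fundWeight s) l) (c : Fin n) :
    phiPath n (fundWeight s) c l = fundWeight (s + ((l.map Finset.card).sum : Fin n)) c := by
  induction l generalizing c with
  | nil => simp [phiPath]
  | cons x l ih =>
    have htail := (isHighestWeight_cons_iff.mp hl).1
    have hx := eq_cyclicInterval_of_isHighestWeight_cons (ih htail) hl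
    have hstep := phiCol_add_fundWeight_sub_epsCol_cyclicInterval
      (card_finset_fin_le x) (s + ((l.map Finset.card).sum : Fin n)) c
    rw [← hx] at hstep
    simp only [phiPath, ih htail, hstep, List.map_cons, List.sum_cons, Nat.cast_add]
    rw [add_comm (x.card : Fin n), add_assoc]

lemma IsHighestWeight.eq_highestWeightPath {l : List (Finset (Fin n))}
    (hl : IsHighestWeight (fundWeight s) l) : l = highestWeightPath s (l.map Finset.card) := by
  induction l with
  | nil => rfl
  | cons x l ih =>
    have htail := (isHighestWeight_cons_iff.mp hl).1
    have hx := eq_cyclicInterval_of_isHighestWeight_cons htail.phiPath_eq hl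
    rw [List.map_cons, highestWeightPath, ← hx, ← ih htail]

end HighestWeight

theorem level_one_restricted_path_unique_general
    (n L : ℕ) (k : Fin L → ℕ) (r : Fin n)
    (p q : Fin L → Finset (Fin n))
    (hpshape : ∀ j, (p j).card = k j) (hqshape : ∀ j, (q j).card = k j)
    (hphw : ∀ c : Fin n,
      epsPath n (fun c => if c = r then 1 else 0) c (List.ofFn p) = 0)
    (hqhw : ∀ c : Fin n,
      epsPath n (fun c => if c = r then 1 else 0) c (List.ofFn q) = 0) :
    p = q := by
  have : NeZero n := NeZero.of_pos r.pos
  have hshape : (List.ofFn p).map Finset.card = (List.ofFn q).map Finset.card := by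
    simp only [List.map_ofFn, Function.comp_def, hpshape, hqshape]
  refine List.ofFn_inj.mp ?_
  rw [IsHighestWeight.eq_highestWeightPath (s := r) hphw,
    IsHighestWeight.eq_highestWeightPath (s := r) hqhw, hshape]

/-- for `g` of type `A_{n-1}^{(1)}`, `B = B^{k_L,1} ⊗ ⋯ ⊗ B^{k_1,1}`
a tensor product of column crystals and `Λ = Λ_r`, `Λ' = Λ_{r'}` level-one
weights, the set `P(B,Λ,Λ')` of paths `b ∈ B` such that `b ⊗ u_Λ` is a highest
weight vector (`ε_i(b ⊗ u_Λ) = 0` for all colors `i`) of weight `Λ'` (i.e.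
`Λ + wt(b) = Λ'` in `P_cl`, expressed via letter contents modulo `(1,…,1)`)
contains at most one element.  Paths are recorded as `p : Fin L → Finset (Fin n)`
with `p 0` the leftmost factor `b_L`. -/
theorem level_one_restricted_path_unique
    (n L : ℕ) (hn : 1 ≤ n) (k : Fin L → ℕ) (r r' : Fin n)
    (p q : Fin L → Finset (Fin n))
    (hpshape : ∀ j, (p j).card = k j) (hqshape : ∀ j, (q j).card = k j)
    (hphw : ∀ c : Fin n,
      epsPath n (fun c => if c = r then 1 else 0) c (List.ofFn p) = 0)
    (hqhw : ∀ c : Fin n,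
      epsPath n (fun c => if c = r then 1 else 0) c (List.ofFn q) = 0)
    (hpwt : ∃ cst : ℤ, ∀ a : Fin n,
      (countLetter n (List.ofFn p) a : ℤ) + (if a.val < r.val then 1 else 0) =
        (if a.val < r'.val then 1 else 0) + cst)
    (hqwt : ∃ cst : ℤ, ∀ a : Fin n,
      (countLetter n (List.ofFn q) a : ℤ) + (if a.val < r.val then 1 else 0) =
        (if a.val < r'.val then 1 else 0) + cst) :
    p = q :=
  level_one_restricted_path_unique_general n L k r p q hpshape hqshape hphw hqhw
end
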